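/- Let α ≤ α′ < β′ ≤ β be real numbers and let η ≥ 0 be an integer. Suppose a polynomial φ has Bernstein coefficients c_0,…,c_η relative to [α,β] and Bernstein coefficients c′_0,…,c′_η relative to the subinterval [α′,β′]; that is, φ(x) = Σ_{ℓ=0}^{η} c_ℓ · b_ℓ^{η,[α,β]}(x) = Σ_{ℓ=0}^{η} c′_ℓ · b_ℓ^{η,[α′,β′]}(x) for all x ∈ ℝ. Then min_{0≤ℓ≤η} c_ℓ ≤ c′_j ≤ max_{0≤ℓ≤η} c_ℓ for every j; in particular the Bernstein coefficient range bound becomes monotonically tighter under subdivision: [min c′, max c′] ⊆ [min c, max c]. -/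

import Mathlib

/-- One-dimensional Bernstein basis function of degree `η`, index `ℓ`, on `[α, β]`. -/
noncomputable def bern (η ℓ : ℕ) (α β x : ℝ) : ℝ :=
  (η.choose ℓ : ℝ) / (β - α) ^ η * (β - x) ^ (η - ℓ) * (x - α) ^ ℓ

/-!
Rescale `[α, β]` to `[0, 1]`; the subinterval `[α', β']` becomes the image of `[0, 1]` under the
affine map `u = s + (t - s) X` with `0 ≤ s ≤ t ≤ 1`. Both `u` and `1 - u` have
nonnegative Bernstein coefficients of degree one, and nonnegativity of Bernstein coefficients is
preserved by products (with degrees adding), so `b_{n,ℓ} ∘ u = C(n,ℓ) u^ℓ (1 - u)^(n-ℓ)` has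
nonnegative Bernstein coefficients `A ℓ j` of degree `n`. Comparing coefficients in the Bernstein
basis gives `c' j = ∑ ℓ, c ℓ A ℓ j`, and the partition of unity `∑ ℓ, b_{n,ℓ} = 1` gives
`∑ ℓ, A ℓ j = 1`, so each `c' j` is a convex combination of the `c ℓ`.
-/

open Polynomial Finset

namespace bernsteinPolynomial

/-- Base change of the linear independence over `ℚ` along the flat extension `ℚ → K`. -/
theorem linearIndependent_of_charZero (K : Type*) [Field K] [CharZero K] (n : ℕ) :
    LinearIndependent K fun ν : Fin (n + 1) => bernsteinPolynomial K n ν := by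
  have h := (Module.Flat.linearIndependent_one_tmul (S := K)
    (bernsteinPolynomial.linearIndependent n)).map' (polyEquivTensor' ℚ K).symm.toLinearMap
    (LinearEquiv.ker _)
  have e : (⇑(polyEquivTensor' ℚ K).symm.toLinearMap ∘
      fun ν : Fin (n + 1) => (1 : K) ⊗ₜ[ℚ] bernsteinPolynomial ℚ n ν) =
      fun ν : Fin (n + 1) => bernsteinPolynomial K n ν := by
    ext ν : 1
    simp [bernsteinPolynomial.map]
  rwa [e] at h

theorem sum_fin (R : Type*) [CommRing R] (n : ℕ) :
    ∑ ν : Fin (n + 1), bernsteinPolynomial R n ν = 1 := by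
  rw [Fin.sum_univ_eq_sum_range (fun ν => bernsteinPolynomial R n ν), bernsteinPolynomial.sum]

theorem choose_add_mul_mul (R : Type*) [CommRing R] (m k i j : ℕ) :
    ((m + k).choose (i + j) : R[X]) * (bernsteinPolynomial R m i * bernsteinPolynomial R k j) =
      (m.choose i * k.choose j : R[X]) * bernsteinPolynomial R (m + k) (i + j) := by
  rcases lt_or_ge m i with hi | hi
  · simp [bernsteinPolynomial.eq_zero_of_lt R hi, Nat.choose_eq_zero_of_lt hi]
  rcases lt_or_ge k j with hj | hj
  · simp [bernsteinPolynomial.eq_zero_of_lt R hj, Nat.choose_eq_zero_of_lt hj]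
  simp only [bernsteinPolynomial, show m + k - (i + j) = (m - i) + (k - j) by omega]
  ring

end bernsteinPolynomial

noncomputable def bernsteinCone (n : ℕ) : PointedCone ℝ ℝ[X] :=
  PointedCone.hull ℝ (Set.range fun ν : Fin (n + 1) => bernsteinPolynomial ℝ n ν)

namespace bernsteinCone

theorem bernsteinPolynomial_mem (n ν : ℕ) : bernsteinPolynomial ℝ n ν ∈ bernsteinCone n := by
  rcases lt_or_ge n ν with h | h
  · rw [bernsteinPolynomial.eq_zero_of_lt ℝ h]
    exact zero_mem _
  · exact PointedCone.subset_hull ⟨⟨ν, Nat.lt_succ_of_le h⟩, rfl⟩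

theorem bernsteinPolynomial_mul_mem (m k i j : ℕ) :
    bernsteinPolynomial ℝ m i * bernsteinPolynomial ℝ k j ∈ bernsteinCone (m + k) := by
  rcases lt_or_ge m i with hi | hi
  · simp [bernsteinPolynomial.eq_zero_of_lt ℝ hi, zero_mem]
  rcases lt_or_ge k j with hj | hj
  · simp [bernsteinPolynomial.eq_zero_of_lt ℝ hj, zero_mem]
  have hpos : (0 : ℝ) < (m + k).choose (i + j) := by
    exact_mod_cast Nat.choose_pos (by omega)
  have h := congrArg (C ((m + k).choose (i + j) : ℝ)⁻¹ * ·)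
    (bernsteinPolynomial.choose_add_mul_mul ℝ m k i j)
  simp only [← C_eq_natCast, ← mul_assoc, ← C_mul, inv_mul_cancel₀ hpos.ne', C_1, one_mul] at h
  rw [h, ← smul_eq_C_mul]
  exact PointedCone.smul_mem _ (by positivity) (bernsteinPolynomial_mem _ _)

theorem mul_mem {m k : ℕ} {p q : ℝ[X]} (hp : p ∈ bernsteinCone m) (hq : q ∈ bernsteinCone k) :
    p * q ∈ bernsteinCone (m + k) := by
  induction hp using Submodule.span_induction with
  | mem p hp =>
    obtain ⟨i, rfl⟩ := hp
    induction hq using Submodule.span_induction with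
    | mem q hq =>
      obtain ⟨j, rfl⟩ := hq
      exact bernsteinPolynomial_mul_mem m k i j
    | zero => simp [zero_mem]
    | add q q' _ _ hq hq' => simpa [mul_add] using add_mem hq hq'
    | smul a q _ hq =>
      rw [mul_smul_comm]
      exact Submodule.smul_mem _ a hq
  | zero => simp [zero_mem]
  | add p p' _ _ hp hp' => simpa [add_mul] using add_mem hp hp'
  | smul a p _ hp =>
    rw [smul_mul_assoc]
    exact Submodule.smul_mem _ a hp

theorem pow_mem {p : ℝ[X]} (hp : p ∈ bernsteinCone 1) (k : ℕ) : p ^ k ∈ bernsteinCone k := by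
  induction k with
  | zero => simpa [bernsteinPolynomial] using bernsteinPolynomial_mem 0 0
  | succ k ih => simpa [pow_succ] using mul_mem ih hp

theorem C_add_C_mul_X_mem {a b : ℝ} (ha : 0 ≤ a) (hab : 0 ≤ a + b) :
    C a + C b * X ∈ bernsteinCone 1 := by
  have h : C a + C b * X =
      a • bernsteinPolynomial ℝ 1 0 + (a + b) • bernsteinPolynomial ℝ 1 1 := by
    rw [show bernsteinPolynomial ℝ 1 0 = 1 - X by simp [bernsteinPolynomial],
      show bernsteinPolynomial ℝ 1 1 = X by simp [bernsteinPolynomial], smul_eq_C_mul,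
      smul_eq_C_mul, C_add]
    ring
  rw [h]
  exact add_mem (PointedCone.smul_mem _ ha (bernsteinPolynomial_mem 1 0))
    (PointedCone.smul_mem _ hab (bernsteinPolynomial_mem 1 1))

theorem bernsteinPolynomial_comp_mem {q : ℝ[X]} (hq : q ∈ bernsteinCone 1)
    (hq' : 1 - q ∈ bernsteinCone 1) (n ν : ℕ) :
    (bernsteinPolynomial ℝ n ν).comp q ∈ bernsteinCone n := by
  rcases lt_or_ge n ν with h | h
  · simp [bernsteinPolynomial.eq_zero_of_lt ℝ h, zero_mem]
  have hn : ν + (n - ν) = n := by omega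
  have := nsmul_mem (mul_mem (pow_mem hq ν) (pow_mem hq' (n - ν))) (n.choose ν)
  simpa [bernsteinPolynomial, hn, nsmul_eq_mul, mul_assoc] using this

end bernsteinCone

theorem bernsteinCoeff_eq_sum_of_comp_eq {n : ℕ} {q : ℝ[X]} {A : Fin (n + 1) → Fin (n + 1) → ℝ}
    (hA : ∀ ℓ : Fin (n + 1), (bernsteinPolynomial ℝ n ℓ).comp q =
      ∑ j, A ℓ j • bernsteinPolynomial ℝ n j)
    {c c' : Fin (n + 1) → ℝ}
    (h : (∑ ℓ, c ℓ • bernsteinPolynomial ℝ n ℓ).comp q = ∑ j, c' j • bernsteinPolynomial ℝ n j)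
    (j : Fin (n + 1)) : c' j = ∑ ℓ, c ℓ * A ℓ j := by
  suffices c' = fun j => ∑ ℓ, c ℓ * A ℓ j from congrFun this j
  apply (bernsteinPolynomial.linearIndependent_of_charZero ℝ n).fintypeLinearCombination_injective
  simp only [Fintype.linearCombination_apply, ← h, Polynomial.sum_comp, smul_comp, hA, smul_sum,
    sum_smul, smul_smul]
  rw [sum_comm]

theorem bernsteinCoeff_bounds_of_comp_affine {n : ℕ} {s t : ℝ} (hs : 0 ≤ s) (hst : s ≤ t)
    (ht : t ≤ 1) {c c' : Fin (n + 1) → ℝ}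
    (h : (∑ ℓ, c ℓ • bernsteinPolynomial ℝ n ℓ).comp (C s + C (t - s) * X) =
      ∑ j, c' j • bernsteinPolynomial ℝ n j) (j : Fin (n + 1)) :
    univ.inf' univ_nonempty c ≤ c' j ∧ c' j ≤ univ.sup' univ_nonempty c := by
  set u : ℝ[X] := C s + C (t - s) * X
  have hu : u ∈ bernsteinCone 1 := bernsteinCone.C_add_C_mul_X_mem hs (by linarith)
  have hu' : 1 - u ∈ bernsteinCone 1 := by
    convert bernsteinCone.C_add_C_mul_X_mem (b := s - t) (sub_nonneg.2 (hst.trans ht))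
      (by linarith) using 1
    simp only [u, map_sub, C_1]
    ring
  choose A hA using fun ℓ : Fin (n + 1) => (Submodule.mem_span_range_iff_exists_fun _).mp
    (bernsteinCone.bernsteinPolynomial_comp_mem hu hu' n ℓ)
  have hA' (ℓ : Fin (n + 1)) : (bernsteinPolynomial ℝ n ℓ).comp u =
      ∑ j, (A ℓ j : ℝ) • bernsteinPolynomial ℝ n j := by
    simp only [← hA ℓ, Nonneg.coe_smul]
  have hsum : ∑ ℓ, (A ℓ j : ℝ) = 1 := by
    have h1 : (∑ ℓ : Fin (n + 1), (1 : ℝ) • bernsteinPolynomial ℝ n ℓ).comp u =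
        ∑ ℓ : Fin (n + 1), (1 : ℝ) • bernsteinPolynomial ℝ n ℓ := by
      simp only [one_smul, bernsteinPolynomial.sum_fin, one_comp]
    simpa using (bernsteinCoeff_eq_sum_of_comp_eq hA' h1 j).symm
  have hcenter : c' j = univ.centerMass (fun ℓ => (A ℓ j : ℝ)) c := by
    rw [centerMass_eq_of_sum_1 _ _ hsum, bernsteinCoeff_eq_sum_of_comp_eq hA' h j]
    simp only [smul_eq_mul, mul_comm]
  have hw₀ (ℓ : Fin (n + 1)) (_ : ℓ ∈ univ) : 0 ≤ (A ℓ j : ℝ) := (A ℓ j).2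
  rw [hcenter]
  exact ⟨inf_le_centerMass hw₀ (by simp [hsum]), centerMass_le_sup hw₀ (by simp [hsum])⟩

theorem bern_eq_eval_bernsteinPolynomial (η ℓ : ℕ) {α β : ℝ} (h : α ≠ β) (x : ℝ) :
    bern η ℓ α β x = (bernsteinPolynomial ℝ η ℓ).eval ((x - α) / (β - α)) := by
  rcases lt_or_ge η ℓ with hℓ | hℓ
  · simp [bern, bernsteinPolynomial.eq_zero_of_lt ℝ hℓ, Nat.choose_eq_zero_of_lt hℓ]
  have hβα : β - α ≠ 0 := sub_ne_zero.2 h.symm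
  have hpow : (β - α) ^ η = (β - α) ^ (η - ℓ) * (β - α) ^ ℓ := by
    rw [← pow_add, Nat.sub_add_cancel hℓ]
  have hsub : 1 - (x - α) / (β - α) = (β - x) / (β - α) := by
    field_simp
    ring
  simp only [bern, bernsteinPolynomial, eval_mul, eval_pow, eval_natCast, eval_sub, eval_one,
    eval_X, hsub, div_pow, hpow]
  field_simp

theorem sum_mul_bern_eq_eval {η : ℕ} (c : Fin (η + 1) → ℝ) {α β : ℝ} (h : α ≠ β) (x : ℝ) :
    ∑ ℓ : Fin (η + 1), c ℓ * bern η ℓ α β x =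
      (∑ ℓ : Fin (η + 1), c ℓ • bernsteinPolynomial ℝ η ℓ).eval ((x - α) / (β - α)) := by
  simp only [eval_finsetSum, eval_smul, smul_eq_mul, bern_eq_eval_bernsteinPolynomial _ _ h]

/-- Bernstein coefficients relative to a subinterval lie within the range of the Bernstein
coefficients relative to the original interval: the Bernstein range bound becomes
monotonically tighter under subdivision. -/
theorem bernstein_subdivision_bound (α β α' β' : ℝ)
    (h1 : α ≤ α') (h2 : α' < β') (h3 : β' ≤ β)
    (η : ℕ) (c c' : Fin (η + 1) → ℝ)
    (hrep : ∀ x : ℝ, ∑ ℓ : Fin (η + 1), c ℓ * bern η ℓ.val α β x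
                   = ∑ ℓ : Fin (η + 1), c' ℓ * bern η ℓ.val α' β' x) :
    ∀ j : Fin (η + 1),
      Finset.univ.inf' Finset.univ_nonempty c ≤ c' j ∧
        c' j ≤ Finset.univ.sup' Finset.univ_nonempty c := by
  have hαβ : α < β := by linarith
  have hβα : 0 < β - α := sub_pos.2 hαβ
  refine bernsteinCoeff_bounds_of_comp_affine (s := (α' - α) / (β - α)) (t := (β' - α) / (β - α))
    (div_nonneg (by linarith) hβα.le) (div_le_div_of_nonneg_right (by linarith) hβα.le)
    ((div_le_one hβα).2 (by linarith)) (Polynomial.funext fun v => ?_)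
  have hv := hrep (α' + (β' - α') * v)
  rw [sum_mul_bern_eq_eval c hαβ.ne, sum_mul_bern_eq_eval c' h2.ne] at hv
  simp only [eval_comp, eval_add, eval_mul, eval_C, eval_X]
  convert hv using 2
  · field_simp
    ring
  · rw [add_sub_cancel_left, mul_div_cancel_left₀ v (sub_pos.2 h2).ne']
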